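/- Let p be a prime not dividing n, with n divisible by p - 1 being irrelevant: if g is an element of finite order in the group F_i S_n = {x ∈ O_n^× : x ≡ 1 mod S^{ni}} with i > 1/(p-1), then g = 1. -/

import Mathlib

open Matrix

variable (p n : ℕ) [Fact p.Prime]

/-- The matrix of right multiplication by `S` on `O_n = W(F_{p^n})⟨S⟩/(S^n = p, Sw = σ(w)S)`,
viewed as a free left `W(F_{p^n})`-module with basis `1, S, …, S^{n-1}`. -/
noncomputable def sMat : Matrix (Fin n) (Fin n) (WittVector p (GaloisField p n)) :=
  Matrix.of fun i j =>
    if (j : ℕ) = (i : ℕ) + 1 then 1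
    else if (i : ℕ) = n - 1 ∧ (j : ℕ) = 0 then (p : WittVector p (GaloisField p n)) else 0

/-- The (twisted diagonal) matrix of right multiplication by `w ∈ W(F_{p^n})` on `O_n`. -/
noncomputable def wDiag (w : WittVector p (GaloisField p n)) :
    Matrix (Fin n) (Fin n) (WittVector p (GaloisField p n)) :=
  Matrix.diagonal fun i => (fun x => WittVector.frobenius x)^[(i : ℕ)] w

/-- The ring `O_n = W(F_{p^n})⟨S⟩/(S^n = p, Sw = σ(w)S)`, realized as the subring of
`n × n` matrices over `W(F_{p^n})` generated by `S` and the (twisted diagonal) copies of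
`W(F_{p^n})`. -/
noncomputable def Oring : Subring (Matrix (Fin n) (Fin n) (WittVector p (GaloisField p n))) :=
  Subring.closure ({sMat p n} ∪ Set.range (wDiag p n))

/-! If `x ≡ 1 mod S^j` has prime order `q`, write `x = 1 + y` and expand `(1 + y)^q = 1`
binomially: `q • y` is a sum of terms `C(q, m) • y^m` with `m ≥ 2`. For `q = p` the terms with
`m < p` carry an extra factor `p = S^n` and `y^p` lies in `S^{pj}`; since `j (p - 1) > n`, all of
them lie in `S^{n+j+1}`, and cancelling `S^n` gives `y ∈ S^{j+1}`. For `q ≠ p`, both `q • y` and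
`p • y` lie in `S^{j+1}`, hence so does `y`. Iterating, `y` lies in every `S^j O_n`, which forces
`y = 0` because `W(F_{p^n})` is `p`-adically separated. An element of arbitrary finite order has
a power of prime order in the same filtration step. -/

theorem AddSubgroup.mem_of_nsmul_mem_of_coprime {A : Type*} [AddCommGroup A] {G : AddSubgroup A}
    {a b : ℕ} (hab : a.Coprime b) {y : A} (ha : a • y ∈ G) (hb : b • y ∈ G) :
    y ∈ G := by
  obtain ⟨u, v, huv⟩ := Nat.isCoprime_iff_coprime.mpr hab
  have : y = u • a • y + v • b • y := by
    rw [← natCast_zsmul, ← natCast_zsmul, smul_smul, smul_smul, ← add_smul, huv, one_smul]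
  rw [this]
  exact add_mem (zsmul_mem ha u) (zsmul_mem hb v)

theorem AddSubgroup.nsmul_mem_of_one_add_pow_eq_one {A : Type*} [Ring A] {G : AddSubgroup A}
    {y : A} {q : ℕ} (hq : 0 < q) (h : (1 + y) ^ q = 1)
    (hG : ∀ m, 2 ≤ m → m ≤ q → q.choose m • y ^ m ∈ G) : q • y ∈ G := by
  have hsum :
      ∑ m ∈ Finset.range (q - 1), q.choose (m + 1 + 1) • y ^ (m + 1 + 1) + q • y = 0 := by
    rw [add_comm, (Commute.one_right y).add_pow, show q + 1 = q - 1 + 1 + 1 by omega,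
      Finset.sum_range_succ', Finset.sum_range_succ'] at h
    simp only [zero_add, pow_zero, pow_one, one_pow, mul_one, Nat.choose_zero_right,
      Nat.choose_one_right, Nat.cast_one, add_eq_right] at h
    simpa only [nsmul_eq_mul, Nat.cast_comm] using h
  rw [eq_neg_of_add_eq_zero_right hsum]
  exact neg_mem (sum_mem fun m hm => hG _ (by omega) (by rw [Finset.mem_range] at hm; omega))

section

variable {p n : ℕ} [Fact p.Prime]

theorem WittVector.eq_zero_of_forall_p_pow_dvd {k : Type*} [Field k] [CharP k p] [PerfectRing k p]
    {a : WittVector p k} (h : ∀ c, (p : WittVector p k) ^ c ∣ a) : a = 0 := by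
  by_contra ha
  obtain ⟨c, hc⟩ := FiniteMultiplicity.of_not_isUnit (WittVector.irreducible p).not_isUnit ha
  exact hc (h _)

theorem WittVector.coeff_iterate_frobenius {k : Type*} [CommRing k] [CharP k p]
    (w : WittVector p k) (m i : ℕ) :
    ((fun x => WittVector.frobenius x)^[m] w).coeff i = w.coeff i ^ p ^ m := by
  induction m with
  | zero => simp
  | succ m ih =>
    rw [Function.iterate_succ_apply', WittVector.coeff_frobenius_charP, ih, ← pow_mul, pow_succ]

theorem GaloisField.pow_card (x : GaloisField p n) : x ^ p ^ n = x := by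
  rcases eq_or_ne n 0 with rfl | hn
  · simp
  have : Fintype (GaloisField p n) := Fintype.ofFinite _
  rw [← GaloisField.card p n hn, Nat.card_eq_fintype_card]
  exact FiniteField.pow_card x

theorem WittVector.iterate_frobenius_galoisField (w : WittVector p (GaloisField p n)) :
    (fun x => WittVector.frobenius x)^[n] w = w := by
  ext i
  rw [WittVector.coeff_iterate_frobenius, GaloisField.pow_card]

local notation "W" => WittVector p (GaloisField p n)
local notation "M" => Matrix (Fin n) (Fin n) (WittVector p (GaloisField p n))

theorem mul_sMat_apply (A : M) (i l : Fin n) :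
    (A * sMat p n) i l =
      if (l : ℕ) = 0 then (p : W) * A i ⟨n - 1, Nat.sub_one_lt_of_lt l.isLt⟩
      else A i ⟨l - 1, (Nat.sub_le _ _).trans_lt l.isLt⟩ := by
  have := l.isLt
  split_ifs with hl
  · rw [Matrix.mul_apply, Finset.sum_eq_single ⟨n - 1, by omega⟩]
    · simp [sMat, hl, mul_comm]
    · intro t _ ht
      have : (t : ℕ) ≠ n - 1 := fun h => ht (Fin.ext h)
      simp [sMat, hl, this]
    · simp
  · rw [Matrix.mul_apply, Finset.sum_eq_single ⟨(l : ℕ) - 1, by omega⟩]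
    · have : (l : ℕ) = l - 1 + 1 := by omega
      simp [sMat, ← this]
    · intro t _ ht
      have : (l : ℕ) ≠ t + 1 := fun h => ht (Fin.ext (by simp; omega))
      simp [sMat, hl, this]
    · simp

theorem sMat_pow_apply {j : ℕ} (hj : j ≤ n) (i l : Fin n) :
    (sMat p n ^ j) i l =
      if (l : ℕ) = i + j then 1 else if (l : ℕ) + n = i + j then (p : W) else 0 := by
  have := i.isLt
  have := l.isLt
  induction j generalizing l with
  | zero =>
    simp only [pow_zero, Matrix.one_apply, Fin.ext_iff, add_zero]
    split_ifs <;> first | omega | rfl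
  | succ j ih =>
    rw [pow_succ, mul_sMat_apply]
    simp only [ih (by omega) _ (Fin.isLt _)]
    split_ifs <;> first | omega | simp

theorem sMat_pow_self : sMat p n ^ n = (p : M) := by
  ext i l
  rw [sMat_pow_apply le_rfl, Matrix.natCast_apply]
  have := l.isLt
  split_ifs <;> first | omega | simp_all [Fin.ext_iff]

theorem sMat_pow_self_mul (a : M) : sMat p n ^ n * a = p • a := by
  rw [sMat_pow_self, nsmul_eq_mul]

theorem nsmul_p_injective : Function.Injective fun a : M => p • a := by
  intro a b h
  refine Matrix.ext fun i l => ?_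
  have := congrFun (congrFun h i) l
  simp only [Matrix.smul_apply, nsmul_eq_mul] at this
  exact mul_left_cancel₀ (WittVector.p_nonzero p _) this

theorem wDiag_mul_sMat (w : W) :
    wDiag p n w * sMat p n =
      sMat p n * wDiag p n ((fun x => WittVector.frobenius x)^[n - 1] w) := by
  ext i l
  have := i.isLt
  simp only [wDiag, Matrix.diagonal_mul, Matrix.mul_diagonal, sMat, Matrix.of_apply,
    ← Function.iterate_add_apply]
  split_ifs with h₁ h₂
  · rw [mul_one, one_mul, h₁, show (i : ℕ) + 1 + (n - 1) = i + n by omega,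
      Function.iterate_add_apply, WittVector.iterate_frobenius_galoisField]
  · rw [h₂.2, h₂.1, zero_add, mul_comm]
  · rw [zero_mul, mul_zero]

theorem sMat_mem_Oring : sMat p n ∈ Oring p n :=
  Subring.subset_closure (Or.inl rfl)

theorem wDiag_mem_Oring (w : W) : wDiag p n w ∈ Oring p n :=
  Subring.subset_closure (Or.inr ⟨w, rfl⟩)

theorem exists_mul_sMat_eq_sMat_mul {x : M} (hx : x ∈ Oring p n) :
    ∃ y ∈ Oring p n, x * sMat p n = sMat p n * y := by
  induction hx using Subring.closure_induction with
  | mem x hx =>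
    rcases hx with rfl | ⟨w, rfl⟩
    · exact ⟨sMat p n, sMat_mem_Oring, rfl⟩
    · exact ⟨_, wDiag_mem_Oring _, wDiag_mul_sMat w⟩
  | zero => exact ⟨0, zero_mem _, by simp⟩
  | one => exact ⟨1, one_mem _, by simp⟩
  | add a b _ _ iha ihb =>
    obtain ⟨ya, hya, ha⟩ := iha
    obtain ⟨yb, hyb, hb⟩ := ihb
    exact ⟨ya + yb, add_mem hya hyb, by rw [add_mul, ha, hb, mul_add]⟩
  | neg a _ iha =>
    obtain ⟨ya, hya, ha⟩ := iha
    exact ⟨-ya, neg_mem hya, by rw [neg_mul, ha, mul_neg]⟩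
  | mul a b _ _ iha ihb =>
    obtain ⟨ya, hya, ha⟩ := iha
    obtain ⟨yb, hyb, hb⟩ := ihb
    exact ⟨ya * yb, mul_mem hya hyb, by rw [mul_assoc, hb, ← mul_assoc, ha, mul_assoc]⟩

theorem exists_mul_sMat_pow_eq_sMat_pow_mul {x : M} (hx : x ∈ Oring p n) (j : ℕ) :
    ∃ y ∈ Oring p n, x * sMat p n ^ j = sMat p n ^ j * y := by
  induction j with
  | zero => exact ⟨x, hx, by simp⟩
  | succ j ih =>
    obtain ⟨y, hy, hxy⟩ := ih
    obtain ⟨y', hy', hyy'⟩ := exists_mul_sMat_eq_sMat_mul hy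
    exact ⟨y', hy', by rw [pow_succ, ← mul_assoc, hxy, mul_assoc, hyy', mul_assoc]⟩

variable (p n) in
/-- `S^j O_n`; in the paper's notation `x ∈ F_{j/n}` iff `x - 1 ∈ sIdeal p n j`. -/
noncomputable def sIdeal (j : ℕ) : AddSubgroup M :=
  (Oring p n).toAddSubgroup.map (AddMonoidHom.mulLeft (sMat p n ^ j))

theorem mem_sIdeal {j : ℕ} {x : M} :
    x ∈ sIdeal p n j ↔ ∃ z ∈ Oring p n, sMat p n ^ j * z = x :=
  Iff.rfl

theorem sIdeal_antitone : Antitone (sIdeal p n) := by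
  intro i j hij x hx
  obtain ⟨z, hz, rfl⟩ := mem_sIdeal.mp hx
  refine mem_sIdeal.mpr ⟨sMat p n ^ (j - i) * z, mul_mem (pow_mem sMat_mem_Oring _) hz, ?_⟩
  rw [← mul_assoc, ← pow_add, Nat.add_sub_cancel' hij]

theorem mem_Oring_of_mem_sIdeal {j : ℕ} {x : M} (hx : x ∈ sIdeal p n j) : x ∈ Oring p n := by
  obtain ⟨z, hz, rfl⟩ := mem_sIdeal.mp hx
  exact mul_mem (pow_mem sMat_mem_Oring _) hz

theorem mul_mem_sIdeal {a b : ℕ} {x y : M} (hx : x ∈ sIdeal p n a) (hy : y ∈ sIdeal p n b) :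
    x * y ∈ sIdeal p n (a + b) := by
  obtain ⟨z, hz, rfl⟩ := mem_sIdeal.mp hx
  obtain ⟨w, hw, rfl⟩ := mem_sIdeal.mp hy
  obtain ⟨z', hz', hzz'⟩ := exists_mul_sMat_pow_eq_sMat_pow_mul hz b
  refine mem_sIdeal.mpr ⟨z' * w, mul_mem hz' hw, ?_⟩
  rw [mul_assoc, ← mul_assoc z, hzz', pow_add, mul_assoc, mul_assoc]

theorem mul_mem_sIdeal_of_mem_Oring {j : ℕ} {x c : M} (hx : x ∈ sIdeal p n j)
    (hc : c ∈ Oring p n) : x * c ∈ sIdeal p n j := by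
  obtain ⟨z, hz, rfl⟩ := mem_sIdeal.mp hx
  exact mem_sIdeal.mpr ⟨z * c, mul_mem hz hc, (mul_assoc _ _ _).symm⟩

theorem pow_mem_sIdeal {j : ℕ} {y : M} (hy : y ∈ sIdeal p n j) {m : ℕ} (hm : m ≠ 0) :
    y ^ m ∈ sIdeal p n (m * j) := by
  induction m with
  | zero => exact absurd rfl hm
  | succ m ih =>
    rcases eq_or_ne m 0 with rfl | hm'
    · simpa using hy
    · rw [pow_succ, add_mul, one_mul]
      exact mul_mem_sIdeal (ih hm') hy

theorem nsmul_p_mem_sIdeal_iff {j : ℕ} {y : M} :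
    p • y ∈ sIdeal p n (j + n) ↔ y ∈ sIdeal p n j := by
  constructor
  · intro h
    obtain ⟨z, hz, hzy⟩ := mem_sIdeal.mp h
    refine mem_sIdeal.mpr ⟨z, hz, nsmul_p_injective (?_ : p • _ = p • y)⟩
    rw [← hzy, add_comm, pow_add, mul_assoc, sMat_pow_self_mul]
  · intro h
    obtain ⟨z, hz, rfl⟩ := mem_sIdeal.mp h
    refine mem_sIdeal.mpr ⟨z, hz, ?_⟩
    rw [pow_add, mul_assoc, sMat_pow_self_mul, mul_smul_comm]

theorem eq_zero_of_forall_mem_sIdeal {y : M} (h : ∀ j, y ∈ sIdeal p n j) : y = 0 := by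
  refine Matrix.ext fun i l => WittVector.eq_zero_of_forall_p_pow_dvd fun c => ?_
  obtain ⟨z, -, hzy⟩ := mem_sIdeal.mp (h (n * c))
  have hS : sMat p n ^ (n * c) * z = p ^ c • z := by
    rw [pow_mul, sMat_pow_self, ← Nat.cast_pow, ← nsmul_eq_mul]
  exact ⟨z i l, by rw [← hzy, hS, Matrix.smul_apply, nsmul_eq_mul, Nat.cast_pow]⟩

theorem pow_sub_one_mem_sIdeal {k : ℕ} {x : M} (hx : x - 1 ∈ sIdeal p n k) (t : ℕ) :
    x ^ t - 1 ∈ sIdeal p n k := by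
  have hxO : x ∈ Oring p n := by
    simpa using add_mem (mem_Oring_of_mem_sIdeal hx) (one_mem (Oring p n))
  rw [← mul_geom_sum]
  exact mul_mem_sIdeal_of_mem_Oring hx (sum_mem fun i _ => pow_mem hxO i)

theorem mem_sIdeal_succ_of_one_add_pow_p_eq_one {j : ℕ} (hj : n < j * (p - 1)) {y : M}
    (hy : y ∈ sIdeal p n j) (h : (1 + y) ^ p = 1) : y ∈ sIdeal p n (j + 1) := by
  have hp : p.Prime := Fact.out
  have hj0 : j ≠ 0 := by rintro rfl; simp at hj
  rw [← nsmul_p_mem_sIdeal_iff]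
  refine AddSubgroup.nsmul_mem_of_one_add_pow_eq_one hp.pos h fun m hm hmp => ?_
  have hym := pow_mem_sIdeal hy (m := m) (by omega)
  rcases hmp.lt_or_eq with hmp | hmp
  · obtain ⟨d, hd⟩ := hp.dvd_choose_self (by omega) hmp
    rw [hd, mul_nsmul]
    refine nsmul_mem (sIdeal_antitone ?_ (nsmul_p_mem_sIdeal_iff.mpr hym)) d
    nlinarith [Nat.pos_of_ne_zero hj0]
  · rw [hmp] at hym
    rw [hmp, Nat.choose_self, one_smul]
    refine sIdeal_antitone ?_ hym
    have : p * j = j * (p - 1) + j := by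
      rw [mul_comm, ← Nat.mul_add_one, Nat.sub_add_cancel hp.one_lt.le]
    omega

theorem mem_sIdeal_succ_of_one_add_pow_eq_one_of_ne (hn : n ≠ 0) {j : ℕ} (hj : j ≠ 0) {y : M}
    (hy : y ∈ sIdeal p n j) {q : ℕ} (hq : q.Prime) (hqp : q ≠ p) (h : (1 + y) ^ q = 1) :
    y ∈ sIdeal p n (j + 1) := by
  refine AddSubgroup.mem_of_nsmul_mem_of_coprime ((Nat.coprime_primes hq Fact.out).mpr hqp)
    (AddSubgroup.nsmul_mem_of_one_add_pow_eq_one hq.pos h fun m hm _ => ?_)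
    (sIdeal_antitone (by omega) (nsmul_p_mem_sIdeal_iff.mpr hy))
  refine nsmul_mem (sIdeal_antitone ?_ (pow_mem_sIdeal hy (m := m) (by omega))) _
  nlinarith [Nat.pos_of_ne_zero hj]

theorem eq_one_of_pow_prime_eq_one (hn : n ≠ 0) {k : ℕ} (hk : n < k * (p - 1)) {x : M}
    (hx : x - 1 ∈ sIdeal p n k) {q : ℕ} (hq : q.Prime) (h : x ^ q = 1) : x = 1 := by
  have hk0 : k ≠ 0 := by rintro rfl; simp at hk
  rw [← add_sub_cancel 1 x] at h
  rw [← sub_eq_zero]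
  have hdeep : ∀ i, x - 1 ∈ sIdeal p n (k + i) := by
    intro i
    induction i with
    | zero => exact hx
    | succ i ih =>
      rcases eq_or_ne q p with rfl | hqp
      · exact mem_sIdeal_succ_of_one_add_pow_p_eq_one
          (hk.trans_le (Nat.mul_le_mul_right _ (Nat.le_add_right k i))) ih h
      · exact mem_sIdeal_succ_of_one_add_pow_eq_one_of_ne hn (by omega : k + i ≠ 0) ih hq hqp h
  exact eq_zero_of_forall_mem_sIdeal fun j => sIdeal_antitone (Nat.le_add_left j k) (hdeep j)

end

theorem torsion_free_deep_filtration_general (p n k : ℕ) [Fact p.Prime] (hn : 0 < n)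
    (hi : n < k * (p - 1))
    (x : Matrix (Fin n) (Fin n) (WittVector p (GaloisField p n)))
    (hcong : ∃ z ∈ Oring p n, x - 1 = sMat p n ^ k * z)
    (htors : ∃ m : ℕ, 0 < m ∧ x ^ m = 1) :
    x = 1 := by
  obtain ⟨z, hz, hxz⟩ := hcong
  have hx : x - 1 ∈ sIdeal p n k := mem_sIdeal.mpr ⟨z, hz, hxz.symm⟩
  obtain ⟨m, hm, hxm⟩ := htors
  have hfin : orderOf x ≠ 0 := (isOfFinOrder_iff_pow_eq_one.mpr ⟨m, hm, hxm⟩).orderOf_pos.ne'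
  rw [← orderOf_eq_one_iff]
  by_contra hne
  obtain ⟨q, hq, hqx⟩ := Nat.exists_prime_and_dvd hne
  have hord : orderOf (x ^ (orderOf x / q)) = q := orderOf_pow_orderOf_div hfin hqx
  have hpow := pow_orderOf_eq_one (x ^ (orderOf x / q))
  rw [hord] at hpow
  have hone := eq_one_of_pow_prime_eq_one hn.ne' hi (pow_sub_one_mem_sIdeal hx _) hq hpow
  rw [← orderOf_eq_one_iff, hord] at hone
  exact hq.one_lt.ne' hone

/-- Torsion elements deep in the filtration of the strict Morava stabilizer group are
trivial: if `x ∈ O_n` satisfies `x ≡ 1 mod S^k` where `k/n = i > 1/(p-1)` (i.e.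
`k·(p-1) > n`), and `x` has finite order, then `x = 1`. -/
theorem torsion_free_deep_filtration (p n k : ℕ) [Fact p.Prime] (hn : 0 < n)
    (hi : n < k * (p - 1))
    (x : Matrix (Fin n) (Fin n) (WittVector p (GaloisField p n)))
    (hx : x ∈ Oring p n)
    (hcong : ∃ z ∈ Oring p n, x - 1 = sMat p n ^ k * z)
    (htors : ∃ m : ℕ, 0 < m ∧ x ^ m = 1) :
    x = 1 :=
  torsion_free_deep_filtration_general p n k hn hi x hcong htors
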